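/- Fix an integer p ≥ 1 and a real number x, and let Ω_n^(p)(y) be defined by Ω_0^(p)(y) = 1, Ω_1^(p)(y) = y − x + p/2, and Ω_{n+1}^(p)(y) = (y − x + p/2)·Ω_n^(p)(y) + (n(n+p−1)/4)·Ω_{n−1}^(p)(y) for n ≥ 1. Then for every n ≥ 0 and every real y, Ω_n^(p)(y) = (i^n n!/2^n) · P_n^{(p/2)}(−i(y − x + p/2); π/2), where the right-hand side is a complex expression whose value is real. -/

import Mathlib

open Polynomial

/-- The Pochhammer symbol `(a)_k = a (a+1) ⋯ (a+k-1)` for complex `a`. -/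
noncomputable def pochC (a : ℂ) (k : ℕ) : ℂ := ∏ i ∈ Finset.range k, (a + i)

/-- The Meixner–Pollaczek polynomial
`P_n^{(λ)}(y; φ) = ((2λ)_n / n!) e^{inφ}
  Σ_{k=0}^n [((-n)_k (λ + iy)_k) / ((2λ)_k k!)] (1 - e^{-2iφ})^k`. -/
noncomputable def meixnerPollaczek (n : ℕ) (lam φ : ℝ) (y : ℂ) : ℂ :=
  pochC (2 * lam) n / (n.factorial : ℂ) * Complex.exp ((n : ℂ) * φ * Complex.I) *
    ∑ k ∈ Finset.range (n + 1),
      pochC (-(n : ℂ)) k * pochC ((lam : ℂ) + Complex.I * y) k /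
        (pochC (2 * lam) k * (k.factorial : ℂ)) *
        (1 - Complex.exp (-(2 * (φ : ℂ) * Complex.I))) ^ k

/-!
At `φ = π/2` one has `e^{inφ} = iⁿ` and `1 - e^{-2iφ} = 2`, so the right-hand side equals
`(-1/2)ⁿ (p)ₙ ₂F₁(-n, z + p/2; p; 2)` with `z = y - x + p/2`. These polynomials satisfy the
recurrence defining `Ω`: it is Gauss' contiguous relation for `₂F₁` in its first parameter. That
relation is checked termwise by telescoping: with `T_k` the `k`-th term of `₂F₁(a, b; c; 2)`, the
`k`-th terms of the combination add up to `D_k - D_{k-1}` where `D_k = 2 (b + k) T_k`, and `D_k`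
vanishes beyond the degree of the terminating series.
-/

open Finset

lemma pochC_zero (a : ℂ) : pochC a 0 = 1 := prod_range_zero _

lemma pochC_succ (a : ℂ) (k : ℕ) : pochC a (k + 1) = pochC a k * (a + k) :=
  prod_range_succ _ _

lemma pochC_succ' (a : ℂ) (k : ℕ) : pochC a (k + 1) = a * pochC (a + 1) k := by
  rw [pochC, prod_range_succ', pochC]
  push_cast
  simp only [add_zero, add_assoc, add_comm (1 : ℂ), mul_comm]

lemma pochC_ne_zero {a : ℂ} (ha : ∀ i : ℕ, a + i ≠ 0) (k : ℕ) : pochC a k ≠ 0 :=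
  prod_ne_zero_iff.2 fun i _ => ha i

lemma pochC_neg_natCast_of_lt {n k : ℕ} (h : n < k) : pochC (-(n : ℂ)) k = 0 :=
  prod_eq_zero (mem_range.2 h) (neg_add_cancel _)

noncomputable def hypergeometricTerm (a b c z : ℂ) (k : ℕ) : ℂ :=
  pochC a k * pochC b k / (pochC c k * (k.factorial : ℂ)) * z ^ k

/-- `₂F₁(-n, b; c; z)`. -/
noncomputable def terminatingHypergeometric (n : ℕ) (b c z : ℂ) : ℂ :=
  ∑ k ∈ range (n + 1), hypergeometricTerm (-(n : ℂ)) b c z k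

lemma hypergeometricTerm_zero (a b c z : ℂ) : hypergeometricTerm a b c z 0 = 1 := by
  simp [hypergeometricTerm, pochC_zero]

lemma terminatingHypergeometric_eq_sum_range {n N : ℕ} (h : n < N) (b c z : ℂ) :
    terminatingHypergeometric n b c z = ∑ k ∈ range N, hypergeometricTerm (-(n : ℂ)) b c z k := by
  refine sum_subset (range_subset_range.2 h) fun k _ hk => ?_
  rw [hypergeometricTerm, pochC_neg_natCast_of_lt (by simpa using hk), zero_mul, zero_div,
    zero_mul]

lemma hypergeometricTerm_two_contiguous_succ (u b c : ℂ) {k : ℕ} (hc : pochC c (k + 1) ≠ 0) :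
    (c - u) * hypergeometricTerm (u - 1) b c 2 (k + 1)
        + (2 * b - c) * hypergeometricTerm u b c 2 (k + 1)
        + u * hypergeometricTerm (u + 1) b c 2 (k + 1)
      = 2 * (b + (k + 1 : ℕ)) * hypergeometricTerm u b c 2 (k + 1)
        - 2 * (b + k) * hypergeometricTerm u b c 2 k := by
  obtain ⟨hck, hck1⟩ := mul_ne_zero_iff.1 (pochC_succ c k ▸ hc)
  have hu : u * pochC (u + 1) (k + 1) = pochC u k * (u + k) * (u + k + 1) := by
    rw [← pochC_succ', pochC_succ, pochC_succ]; push_cast; ring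
  have hu' : pochC (u - 1) (k + 1) = (u - 1) * pochC u k := by
    rw [pochC_succ', sub_add_cancel]
  simp only [hypergeometricTerm, pochC_succ u, pochC_succ b, pochC_succ c, Nat.factorial_succ,
    hu']
  have hk : ((k + 1 : ℕ) : ℂ) ≠ 0 := Nat.cast_ne_zero.2 k.succ_ne_zero
  have hf : (k.factorial : ℂ) ≠ 0 := Nat.cast_ne_zero.2 k.factorial_ne_zero
  field_simp
  push_cast at hu ⊢
  linear_combination (2 * pochC b k * (b + k) * (k.factorial : ℂ) * 2 ^ k) * hu

lemma sum_range_hypergeometricTerm_two_contiguous (u b : ℂ) {c : ℂ} (hc : ∀ i : ℕ, c + i ≠ 0)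
    (K : ℕ) :
    ∑ k ∈ range (K + 1), ((c - u) * hypergeometricTerm (u - 1) b c 2 k
        + (2 * b - c) * hypergeometricTerm u b c 2 k + u * hypergeometricTerm (u + 1) b c 2 k)
      = 2 * (b + K) * hypergeometricTerm u b c 2 K := by
  induction K with
  | zero => simp only [zero_add, sum_range_one, hypergeometricTerm_zero]; push_cast; ring
  | succ K ih =>
    rw [sum_range_succ, ih, hypergeometricTerm_two_contiguous_succ u b c (pochC_ne_zero hc _)]
    ring

/-- Gauss' contiguous relation
`(c - a) F(a - 1) + (2a - c + (b - a) z) F(a) + a (z - 1) F(a + 1) = 0` for `F(a) = ₂F₁(a, b; c; z)`,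
at `a = -(n + 1)` and `z = 2`. -/
theorem terminatingHypergeometric_two_contiguous (n : ℕ) (b : ℂ) {c : ℂ}
    (hc : ∀ i : ℕ, c + i ≠ 0) :
    (c + (n + 1)) * terminatingHypergeometric (n + 2) b c 2
      + (2 * b - c) * terminatingHypergeometric (n + 1) b c 2
      - (n + 1) * terminatingHypergeometric n b c 2 = 0 := by
  have telescope := sum_range_hypergeometricTerm_two_contiguous (-((n + 1 : ℕ) : ℂ)) b hc (n + 2)
  rw [show -((n + 1 : ℕ) : ℂ) - 1 = -((n + 2 : ℕ) : ℂ) by push_cast; ring,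
    show -((n + 1 : ℕ) : ℂ) + 1 = -(n : ℂ) by push_cast; ring, hypergeometricTerm,
    pochC_neg_natCast_of_lt (by omega), zero_mul, zero_div, zero_mul, mul_zero,
    sum_add_distrib, sum_add_distrib, ← mul_sum, ← mul_sum, ← mul_sum] at telescope
  rw [terminatingHypergeometric_eq_sum_range (by omega : n + 2 < n + 2 + 1),
    terminatingHypergeometric_eq_sum_range (by omega : n + 1 < n + 2 + 1),
    terminatingHypergeometric_eq_sum_range (by omega : n < n + 2 + 1)]
  push_cast at telescope ⊢
  linear_combination telescope

lemma meixnerPollaczek_pi_div_two (n : ℕ) (lam : ℝ) (y : ℂ) :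
    meixnerPollaczek n lam (Real.pi / 2) y = pochC (2 * lam) n / (n.factorial : ℂ) *
      Complex.I ^ n * terminatingHypergeometric n (lam + Complex.I * y) (2 * lam) 2 := by
  have hrot : Complex.exp ((n : ℂ) * (Real.pi / 2 : ℝ) * Complex.I) = Complex.I ^ n := by
    rw [show (n : ℂ) * (Real.pi / 2 : ℝ) * Complex.I = n * (Real.pi / 2 * Complex.I) by
      push_cast; ring, Complex.exp_nat_mul, Complex.exp_pi_div_two_mul_I]
  have hreflect : 1 - Complex.exp (-(2 * (Real.pi / 2 : ℝ) * Complex.I)) = 2 := by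
    rw [show -(2 * ((Real.pi / 2 : ℝ) : ℂ) * Complex.I) = -(Real.pi * Complex.I) by push_cast; ring,
      Complex.exp_neg, Complex.exp_pi_mul_I]
    norm_num
  rw [meixnerPollaczek, hrot, hreflect]
  rfl

noncomputable def monicMeixnerPollaczek (lam : ℝ) (n : ℕ) (z : ℂ) : ℂ :=
  Complex.I ^ n * (n.factorial : ℂ) / 2 ^ n *
    meixnerPollaczek n lam (Real.pi / 2) (-Complex.I * z)

lemma monicMeixnerPollaczek_eq (lam : ℝ) (n : ℕ) (z : ℂ) :
    monicMeixnerPollaczek lam n z =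
      (-1 / 2) ^ n * pochC (2 * lam) n * terminatingHypergeometric n (lam + z) (2 * lam) 2 := by
  have hz : Complex.I * (-Complex.I * z) = z := by
    rw [← mul_assoc, mul_neg, Complex.I_mul_I, neg_neg, one_mul]
  have hI : Complex.I ^ n * Complex.I ^ n = (-1) ^ n := by rw [← mul_pow, Complex.I_mul_I]
  have hf : (n.factorial : ℂ) ≠ 0 := Nat.cast_ne_zero.2 n.factorial_ne_zero
  rw [monicMeixnerPollaczek, meixnerPollaczek_pi_div_two, hz, div_pow, ← hI]
  field_simp

lemma monicMeixnerPollaczek_zero (lam : ℝ) (z : ℂ) : monicMeixnerPollaczek lam 0 z = 1 := by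
  simp [monicMeixnerPollaczek_eq, terminatingHypergeometric, pochC_zero, hypergeometricTerm_zero]

lemma monicMeixnerPollaczek_one {lam : ℝ} (hlam : lam ≠ 0) (z : ℂ) :
    monicMeixnerPollaczek lam 1 z = z := by
  have hlam' : (lam : ℂ) ≠ 0 := Complex.ofReal_ne_zero.2 hlam
  simp only [monicMeixnerPollaczek_eq, terminatingHypergeometric, sum_range_succ, sum_range_zero,
    hypergeometricTerm, pochC_succ, pochC_zero]
  field_simp
  ring

lemma monicMeixnerPollaczek_add_two {lam : ℝ} (hlam : ∀ i : ℕ, 2 * (lam : ℂ) + i ≠ 0) (n : ℕ)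
    (z : ℂ) :
    monicMeixnerPollaczek lam (n + 2) z = z * monicMeixnerPollaczek lam (n + 1) z
      + ((n + 1) * (n + 2 * lam) / 4) * monicMeixnerPollaczek lam n z := by
  simp only [monicMeixnerPollaczek_eq, pochC_succ _ (n + 1), pochC_succ _ n]
  push_cast
  linear_combination (-1 / 2 : ℂ) ^ n / 4 * pochC (2 * lam) n * (2 * lam + n) *
    terminatingHypergeometric_two_contiguous n (lam + z) hlam

/-- the monic orthogonal polynomials `Ω_n^(p)` for the higher-order
Euler polynomials, defined through the three-term recurrence
`Ω_{n+1} = (y - x + p/2) Ω_n + (n(n+p-1)/4) Ω_{n-1}`, are given by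
`Ω_n^(p)(y) = (i^n n!/2^n) P_n^{(p/2)}(-i(y - x + p/2); π/2)`. -/
theorem stmt_4 (p : ℕ) (hp : 1 ≤ p) (x : ℝ)
    (Ω : ℕ → ℝ → ℝ)
    (hΩ0 : ∀ y : ℝ, Ω 0 y = 1)
    (hΩ1 : ∀ y : ℝ, Ω 1 y = y - x + (p : ℝ) / 2)
    (hΩrec : ∀ n : ℕ, 1 ≤ n → ∀ y : ℝ,
      Ω (n + 1) y = (y - x + (p : ℝ) / 2) * Ω n y
        + ((n : ℝ) * ((n : ℝ) + (p : ℝ) - 1) / 4) * Ω (n - 1) y) :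
    ∀ (n : ℕ) (y : ℝ),
      (Ω n y : ℂ) = Complex.I ^ n * (n.factorial : ℂ) / 2 ^ n *
        meixnerPollaczek n ((p : ℝ) / 2) (Real.pi / 2)
          (-Complex.I * ((y : ℂ) - (x : ℂ) + (p : ℂ) / 2)) := by
  suffices h : ∀ n y, (Ω n y : ℂ) = monicMeixnerPollaczek (p / 2) n (y - x + p / 2) from h
  have hlam : ∀ i : ℕ, 2 * (((p : ℝ) / 2 : ℝ) : ℂ) + i ≠ 0 := fun i => by
    rw [show 2 * (((p : ℝ) / 2 : ℝ) : ℂ) = p by push_cast; ring]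
    exact_mod_cast (by omega : p + i ≠ 0)
  intro n
  induction n using Nat.twoStepInduction with
  | zero => intro y; rw [hΩ0, monicMeixnerPollaczek_zero, Complex.ofReal_one]
  | one =>
    intro y
    rw [hΩ1, monicMeixnerPollaczek_one (by positivity)]
    push_cast; ring
  | more n ih₀ ih₁ =>
    intro y
    rw [hΩrec (n + 1) (by omega), monicMeixnerPollaczek_add_two hlam, Nat.add_sub_cancel]
    push_cast
    rw [ih₀, ih₁]
    ring
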